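/- arXiv:2001.02568 — 2 statements merged into one kernel-verified Lean document; each statement's English description precedes it below -/
import Mathlib

section
/- Let X have skinny SVD X = UΣVᵀ with r = rank(X). Among all n×n matrices Z satisfying X = XZ, the matrix Z* = VVᵀ minimizes the nuclear norm ‖Z‖_*, and the minimum value is r. -/
/-! Since `X = U D Vᵀ` with `Uᵀ U = 1` and `D` invertible, the constraint `X = X Z` forces
`Vᵀ Z = Vᵀ`, hence `r = tr (Vᵀ Z V) = tr (V Vᵀ Z)`. Computing this trace in an orthonormal
eigenbasis `(wᵢ)` of `Zᵀ Z`, each term `⟪wᵢ, V Vᵀ Z wᵢ⟫` is at most `‖Z wᵢ‖ = σᵢ(Z)` because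
`V Vᵀ` is an orthogonal projection, so `r ≤ ‖Z‖_*`. Conversely `V Vᵀ` is itself a projection of
trace `r`, so its singular values are `0` or `1` and its nuclear norm is exactly `r`. -/

open Matrix

/-- The nuclear norm of a real matrix: the sum of its singular values,
where the singular values are the square roots of the eigenvalues of `Aᴴ * A`. -/
noncomputable def nuclearNorm {m n : ℕ} (A : Matrix (Fin m) (Fin n) ℝ) : ℝ :=
  ∑ i, Real.sqrt ((Matrix.isHermitian_conjTranspose_mul_self A).eigenvalues i)

theorem dotProduct_le_sqrt_mul_sqrt {n : Type*} [Fintype n] (x y : n → ℝ) :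
    x ⬝ᵥ y ≤ √(x ⬝ᵥ x) * √(y ⬝ᵥ y) := by
  simpa [dotProduct, sq] using Real.sum_mul_le_sqrt_mul_sqrt Finset.univ x y

section Isometry

variable {n r : Type*} [Fintype n] [Fintype r] [DecidableEq r] {V : Matrix n r ℝ}

theorem transpose_mulVec_dotProduct_self_le (hV : Vᵀ * V = 1) (x : n → ℝ) :
    (Vᵀ *ᵥ x) ⬝ᵥ (Vᵀ *ᵥ x) ≤ x ⬝ᵥ x := by
  set a := Vᵀ *ᵥ x
  have hxa : x ⬝ᵥ V *ᵥ a = a ⬝ᵥ a := by rw [dotProduct_mulVec, ← mulVec_transpose]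
  have haa : (V *ᵥ a) ⬝ᵥ (V *ᵥ a) = a ⬝ᵥ a := by
    rw [dotProduct_mulVec, ← mulVec_transpose, mulVec_mulVec, hV, one_mulVec]
  -- `x ⬝ᵥ x - a ⬝ᵥ a` is the squared length of `x - V a`
  have hres : 0 ≤ (x - V *ᵥ a) ⬝ᵥ (x - V *ᵥ a) := by
    simpa using dotProduct_self_star_nonneg (x - V *ᵥ a)
  simp only [sub_dotProduct, dotProduct_sub, haa, hxa, dotProduct_comm (V *ᵥ a) x] at hres
  linarith

theorem dotProduct_mul_transpose_mulVec_le (hV : Vᵀ * V = 1) (x y : n → ℝ) :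
    x ⬝ᵥ (V * Vᵀ) *ᵥ y ≤ √(x ⬝ᵥ x) * √(y ⬝ᵥ y) :=
  calc x ⬝ᵥ (V * Vᵀ) *ᵥ y = (Vᵀ *ᵥ x) ⬝ᵥ (Vᵀ *ᵥ y) := by
        rw [← mulVec_mulVec, dotProduct_mulVec, ← mulVec_transpose]
    _ ≤ √((Vᵀ *ᵥ x) ⬝ᵥ (Vᵀ *ᵥ x)) * √((Vᵀ *ᵥ y) ⬝ᵥ (Vᵀ *ᵥ y)) :=
        dotProduct_le_sqrt_mul_sqrt _ _
    _ ≤ √(x ⬝ᵥ x) * √(y ⬝ᵥ y) := by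
        gcongr <;> exact transpose_mulVec_dotProduct_self_le hV _

end Isometry

theorem OrthonormalBasis.ofLp_dotProduct_self {ι n : Type*} [Fintype ι] [Fintype n]
    (b : OrthonormalBasis ι ℝ (EuclideanSpace ℝ n)) (i : ι) :
    (b i).ofLp ⬝ᵥ (b i).ofLp = 1 := by
  simpa only [EuclideanSpace.inner_eq_star_dotProduct, star_trivial] using b.inner_eq_one i

theorem trace_eq_sum_dotProduct_mulVec {ι n : Type*} [Fintype ι] [Fintype n] [DecidableEq n]
    (A : Matrix n n ℝ) (b : OrthonormalBasis ι ℝ (EuclideanSpace ℝ n)) :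
    A.trace = ∑ i, (b i).ofLp ⬝ᵥ A *ᵥ (b i).ofLp := by
  have h := LinearMap.trace_eq_sum_inner (toLpLin 2 2 A) b
  rw [LinearMap.trace_eq_matrix_trace ℝ (PiLp.basisFun 2 ℝ n), toLpLin_eq_toLin,
    LinearMap.toMatrix_toLin, ← toLpLin_eq_toLin] at h
  simpa only [EuclideanSpace.inner_eq_star_dotProduct, ofLp_toLpLin, toLin'_apply, star_trivial,
    dotProduct_comm] using h

theorem mulVec_eigenvectorBasis_dotProduct_self {m n : Type*} [Fintype m] [Fintype n]
    [DecidableEq n] (Z : Matrix m n ℝ) (i : n) :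
    (Z *ᵥ ((isHermitian_conjTranspose_mul_self Z).eigenvectorBasis i).ofLp) ⬝ᵥ
      (Z *ᵥ ((isHermitian_conjTranspose_mul_self Z).eigenvectorBasis i).ofLp) =
      (isHermitian_conjTranspose_mul_self Z).eigenvalues i := by
  rw [(isHermitian_conjTranspose_mul_self Z).eigenvalues_eq, ← mulVec_mulVec]
  generalize ((isHermitian_conjTranspose_mul_self Z).eigenvectorBasis i).ofLp = v
  rw [conjTranspose_eq_transpose_of_trivial, star_trivial, RCLike.re_to_real,
    dotProduct_mulVec v, vecMul_transpose]

section NuclearNorm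

variable {m n r : ℕ}

theorem trace_transpose_mul_mul_le_nuclearNorm {ι : Type*} [Fintype ι] [DecidableEq ι]
    {V : Matrix (Fin n) ι ℝ} (hV : Vᵀ * V = 1) (Z : Matrix (Fin n) (Fin n) ℝ) :
    (Vᵀ * Z * V).trace ≤ nuclearNorm Z := by
  set b := (isHermitian_conjTranspose_mul_self Z).eigenvectorBasis
  calc (Vᵀ * Z * V).trace = (V * Vᵀ * Z).trace := trace_mul_cycle _ _ _
    _ = ∑ i, (b i).ofLp ⬝ᵥ (V * Vᵀ) *ᵥ Z *ᵥ (b i).ofLp := by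
        simp only [trace_eq_sum_dotProduct_mulVec _ b, mulVec_mulVec]
    _ ≤ ∑ i, √((b i).ofLp ⬝ᵥ (b i).ofLp) * √((Z *ᵥ (b i).ofLp) ⬝ᵥ (Z *ᵥ (b i).ofLp)) :=
        Finset.sum_le_sum fun i _ => dotProduct_mul_transpose_mulVec_le hV _ _
    _ = nuclearNorm Z := by
        simp only [b, OrthonormalBasis.ofLp_dotProduct_self,
          mulVec_eigenvectorBasis_dotProduct_self, Real.sqrt_one, one_mul, nuclearNorm]

theorem nuclearNorm_eq_trace_of_isIdempotentElem {A : Matrix (Fin m) (Fin n) ℝ}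
    (hA : IsIdempotentElem (Aᴴ * A)) : nuclearNorm A = (Aᴴ * A).trace := by
  rw [(isHermitian_conjTranspose_mul_self A).trace_eq_sum_eigenvalues, nuclearNorm]
  refine Finset.sum_congr rfl fun i _ => ?_
  obtain h | h := hA.spectrum_subset ℝ
    ((isHermitian_conjTranspose_mul_self A).eigenvalues_mem_spectrum_real i)
  all_goals simp_all

theorem nuclearNorm_mul_transpose {V : Matrix (Fin n) (Fin r) ℝ} (hV : Vᵀ * V = 1) :
    nuclearNorm (V * Vᵀ) = r := by
  have hsymm : (V * Vᵀ)ᴴ = V * Vᵀ := by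
    rw [conjTranspose_eq_transpose_of_trivial, transpose_mul, transpose_transpose]
  have hidem : IsIdempotentElem (V * Vᵀ) := by
    rw [IsIdempotentElem, Matrix.mul_assoc, ← Matrix.mul_assoc Vᵀ, hV, Matrix.one_mul]
  rw [nuclearNorm_eq_trace_of_isIdempotentElem (by rwa [hsymm, hidem.eq]), hsymm, hidem.eq,
    trace_mul_comm, hV, trace_one, Fintype.card_fin]

end NuclearNorm

theorem mul_mul_transpose_of_eq_mul_transpose {R : Type*} [CommSemiring R]
    {m n r : Type*} [Fintype n] [Fintype r] [DecidableEq r]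
    {X : Matrix m n R} {W : Matrix m r R} {V : Matrix n r R}
    (hV : Vᵀ * V = 1) (hX : X = W * Vᵀ) : X * (V * Vᵀ) = X := by
  rw [hX, Matrix.mul_assoc, ← Matrix.mul_assoc Vᵀ, hV, Matrix.one_mul]

theorem transpose_mul_eq_of_mul_eq {K : Type*} [Field K]
    {m n r : Type*} [Fintype m] [Fintype n] [Fintype r] [DecidableEq r]
    {X : Matrix m n K} {U : Matrix m r K} {d : r → K} {V : Matrix n r K}
    (hd : ∀ i, d i ≠ 0) (hU : Uᵀ * U = 1) (hX : X = U * diagonal d * Vᵀ)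
    {Z : Matrix n n K} (hXZ : X * Z = X) : Vᵀ * Z = Vᵀ := by
  have hd_inv : diagonal d⁻¹ * diagonal d = 1 := by
    rw [diagonal_mul_diagonal, ← diagonal_one]
    exact congrArg diagonal (funext fun i => inv_mul_cancel₀ (hd i))
  have hleft : diagonal d⁻¹ * Uᵀ * X = Vᵀ :=
    calc diagonal d⁻¹ * Uᵀ * X = diagonal d⁻¹ * (Uᵀ * U) * diagonal d * Vᵀ := by
          simp only [hX, Matrix.mul_assoc]
      _ = Vᵀ := by rw [hU, Matrix.mul_one, hd_inv, Matrix.one_mul]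
  rw [← hleft, Matrix.mul_assoc, hXZ]

theorem skinny_svd_minimizes_nuclear_norm_general
    {m n r : ℕ}
    (X : Matrix (Fin m) (Fin n) ℝ)
    (U : Matrix (Fin m) (Fin r) ℝ)
    (d : Fin r → ℝ)
    (V : Matrix (Fin n) (Fin r) ℝ)
    (hd : ∀ i, 0 < d i)
    (hU : Uᵀ * U = 1)
    (hV : Vᵀ * V = 1)
    (hX : X = U * Matrix.diagonal d * Vᵀ) :
    (X = X * (V * Vᵀ)) ∧
    (∀ Z : Matrix (Fin n) (Fin n) ℝ, X = X * Z →
      nuclearNorm (V * Vᵀ) ≤ nuclearNorm Z) ∧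
    nuclearNorm (V * Vᵀ) = (r : ℝ) := by
  refine ⟨(mul_mul_transpose_of_eq_mul_transpose hV hX).symm, fun Z hXZ => ?_,
    nuclearNorm_mul_transpose hV⟩
  have hVZ : Vᵀ * Z = Vᵀ := transpose_mul_eq_of_mul_eq (fun i => (hd i).ne') hU hX hXZ.symm
  calc nuclearNorm (V * Vᵀ) = (Vᵀ * Z * V).trace := by
        rw [nuclearNorm_mul_transpose hV, hVZ, hV, trace_one, Fintype.card_fin]
    _ ≤ nuclearNorm Z := trace_transpose_mul_mul_le_nuclearNorm hV Z

/-- Among all feasible self-representations `Z` (i.e. `X = X * Z`), the matrix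
`V * Vᵀ` from the skinny SVD minimizes the nuclear norm, and the minimum value
is `r = rank X`. -/
theorem skinny_svd_minimizes_nuclear_norm
    {m n r : ℕ}
    (X : Matrix (Fin m) (Fin n) ℝ)
    (U : Matrix (Fin m) (Fin r) ℝ)
    (d : Fin r → ℝ)
    (V : Matrix (Fin n) (Fin r) ℝ)
    (hd : ∀ i, 0 < d i)
    (hU : Uᵀ * U = 1)
    (hV : Vᵀ * V = 1)
    (hX : X = U * Matrix.diagonal d * Vᵀ)
    (hr : r = X.rank) :
    (X = X * (V * Vᵀ)) ∧
    (∀ Z : Matrix (Fin n) (Fin n) ℝ, X = X * Z →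
      nuclearNorm (V * Vᵀ) ≤ nuclearNorm Z) ∧
    nuclearNorm (V * Vᵀ) = (r : ℝ) :=
  skinny_svd_minimizes_nuclear_norm_general X U d V hd hU hV hX
end

section
/- In the alternating updates V_{t+1} = (μ_V I + β U_tᵀU_t)^{-1} β U_tᵀ M_t and the column-wise soft-thresholding update for U_{t+1}, if the i-th column of U_t is the zero vector, then the i-th row of V_{t+1} is zero and the i-th column of U_{t+1} is zero. Hence zero columns of U persist under all subsequent iterations. -/
open Matrix

/-- In the alternating updates of the AALM algorithm, a zero column of `U`
yields a zero row of the updated `V'` and a zero column of the updated `U'`;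
hence zero columns of `U` persist under subsequent iterations. -/
theorem zero_column_persists
    {m n K : ℕ}
    (X E Y : Matrix (Fin m) (Fin n) ℝ)
    (U U' : Matrix (Fin m) (Fin K) ℝ)
    (V' : Matrix (Fin K) (Fin n) ℝ)
    (μV β ξ c : ℝ)
    (hμV : 0 < μV) (hβ : 0 < β) (hξ : 0 < ξ) (hc : 0 < c)
    -- V-update: V' = (μ_V I + β UᵀU)⁻¹ β Uᵀ M with M = X − E − Y/β
    (hV : V' = (μV • (1 : Matrix (Fin K) (Fin K) ℝ) + β • (Uᵀ * U))⁻¹ *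
        (β • (Uᵀ * (X - E - β⁻¹ • Y))))
    -- U-update: column-wise soft thresholding on Q = U − (U V' + E − X + Y/β) V'ᵀ / ξ
    (Q : Matrix (Fin m) (Fin K) ℝ)
    (hQ : Q = U - ξ⁻¹ • ((U * V' + E - X + β⁻¹ • Y) * V'ᵀ))
    (hU' : ∀ a j, U' a j =
      max (Real.sqrt (∑ b, (Q b j) ^ 2) - c) 0 * Q a j /
        Real.sqrt (∑ b, (Q b j) ^ 2))
    (i : Fin K)
    (hcol : ∀ a, U a i = 0) :
    (∀ k, V' i k = 0) ∧ (∀ a, U' a i = 0) := by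
  set A := μV • (1 : Matrix (Fin K) (Fin K) ℝ) + β • (Uᵀ * U) with hA
  have hrowA : ∀ j, A i j = if i = j then μV else 0 := by
    intro j
    simp [hA, Matrix.add_apply, Matrix.smul_apply, Matrix.one_apply,
      Matrix.mul_apply, Matrix.transpose_apply, hcol]
  have hC : ∀ k, (β • (Uᵀ * (X - E - β⁻¹ • Y))) i k = 0 := by
    intro k
    simp [Matrix.smul_apply, Matrix.mul_apply, Matrix.transpose_apply, hcol]
  have hVi : ∀ k, V' i k = 0 := by
    by_cases h : IsUnit A.det
    · have h1 : A * V' = β • (Uᵀ * (X - E - β⁻¹ • Y)) := by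
        rw [hV, ← Matrix.mul_assoc, Matrix.mul_nonsing_inv _ h, Matrix.one_mul]
      intro k
      have h2 := congrArg (fun M => M i k) h1
      simp only [Matrix.mul_apply] at h2
      rw [hC k] at h2
      have h3 : μV * V' i k = 0 := by
        rw [← h2, Finset.sum_eq_single i]
        · rw [hrowA i]; simp
        · intro b _ hb; rw [hrowA b]; simp [(Ne.symm hb : i ≠ b)]
        · simp
      rcases mul_eq_zero.mp h3 with h4 | h4
      · exact absurd h4 (ne_of_gt hμV)
      · exact h4
    · rw [hV, Matrix.nonsing_inv_apply_not_isUnit _ h]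
      intro k; simp
  have hQi : ∀ a, Q a i = 0 := by
    intro a
    rw [hQ]
    simp [Matrix.sub_apply, Matrix.smul_apply, Matrix.mul_apply,
      Matrix.transpose_apply, hVi, hcol a]
  refine ⟨hVi, fun a => ?_⟩
  rw [hU' a i, hQi a]
  simp
end
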